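/- In a Euclidean conformal triangle datum, at every point of U and for all distinct i, j ∈ {1,2,3}: ∂γ_i/∂f_j = ∂γ_j/∂f_i; equivalently, h_ij = h_ji. -/

import Mathlib

noncomputable section

/-- Partial derivative of `F` in the `k`-th coordinate direction at `x`. -/
def pd (k : Fin 3) (F : (Fin 3 → ℝ) → ℝ) (x : Fin 3 → ℝ) : ℝ :=
  fderiv ℝ F x (Pi.single k 1)

/-- The edge length `ℓ_ij = d_ij + d_ji` determined by the partial edge lengths. -/
def len (d : Fin 3 → Fin 3 → (Fin 3 → ℝ) → ℝ) (i j : Fin 3) (x : Fin 3 → ℝ) : ℝ :=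
  d i j x + d j i x

/-- The index complementary to `i` and `j` in `{0,1,2}` (for `i ≠ j`). -/
def other (i j : Fin 3) : Fin 3 := -(i + j)

/-- The angle `γ_i` of the Euclidean triangle with side lengths `ℓ_ab`, defined by the
Euclidean law of cosines `cos γ_i = (ℓ_ij² + ℓ_ik² − ℓ_jk²)/(2 ℓ_ij ℓ_ik)`. -/
def eGamma (d : Fin 3 → Fin 3 → (Fin 3 → ℝ) → ℝ) (i : Fin 3) (x : Fin 3 → ℝ) : ℝ :=
  Real.arccos ((len d i (i+1) x ^ 2 + len d i (i+2) x ^ 2 - len d (i+1) (i+2) x ^ 2) /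
    (2 * len d i (i+1) x * len d i (i+2) x))

/-- The signed height `h_ij = (d_ik − d_ij cos γ_i)/sin γ_i` from the edge center of edge
`{i,j}` to the dual center of the triangle. -/
def eHeight (d : Fin 3 → Fin 3 → (Fin 3 → ℝ) → ℝ) (i j : Fin 3) (x : Fin 3 → ℝ) : ℝ :=
  (d i (other i j) x - d i j x * Real.cos (eGamma d i x)) / Real.sin (eGamma d i x)

/-! ### Auxiliary lemmas -/

lemma len_comm (d : Fin 3 → Fin 3 → (Fin 3 → ℝ) → ℝ) (u v : Fin 3) (x : Fin 3 → ℝ) :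
    len d u v x = len d v u x := add_comm _ _

lemma fin3_arrange : ∀ i j : Fin 3, i ≠ j →
    (j = i + 1 ∧ other i j = i + 2) ∨ (j = i + 2 ∧ other i j = i + 1) := by decide

lemma other_ne_left : ∀ i j : Fin 3, i ≠ j → other i j ≠ i := by decide

lemma other_ne_right : ∀ i j : Fin 3, i ≠ j → other i j ≠ j := by decide

lemma other_comm : ∀ i j : Fin 3, other j i = other i j := by decide

lemma compat_perm (d : Fin 3 → Fin 3 → (Fin 3 → ℝ) → ℝ) (x : Fin 3 → ℝ)
    (h : d 0 1 x ^ 2 + d 1 2 x ^ 2 + d 2 0 x ^ 2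
        = d 1 0 x ^ 2 + d 2 1 x ^ 2 + d 0 2 x ^ 2) :
    ∀ i j k : Fin 3, i ≠ j → j ≠ k → i ≠ k →
      d i j x ^ 2 + d j k x ^ 2 + d k i x ^ 2
        = d j i x ^ 2 + d k j x ^ 2 + d i k x ^ 2 := by
  intro i j k hij hjk hik
  fin_cases i <;> fin_cases j <;> fin_cases k <;> simp_all <;> linarith

lemma pd_len_add (d : Fin 3 → Fin 3 → (Fin 3 → ℝ) → ℝ) (x : Fin 3 → ℝ) (j u v : Fin 3)
    (hu : DifferentiableAt ℝ (d u v) x) (hv : DifferentiableAt ℝ (d v u) x) :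
    pd j (len d u v) x = pd j (d u v) x + pd j (d v u) x := by
  have h : fderiv ℝ (fun y => d u v y + d v u y) x
      = fderiv ℝ (d u v) x + fderiv ℝ (d v u) x := fderiv_add hu hv
  show fderiv ℝ (fun y => d u v y + d v u y) x (Pi.single j 1) = _
  rw [h]
  rfl

/-- The core derivative computation: partial derivative of the law-of-cosines angle. -/
lemma pd_arccos_core (L1 L2 L3 : (Fin 3 → ℝ) → ℝ) (x : Fin 3 → ℝ) (j : Fin 3)
    (h1 : DifferentiableAt ℝ L1 x) (h2 : DifferentiableAt ℝ L2 x)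
    (h3 : DifferentiableAt ℝ L3 x)
    (hA : 0 < L1 x) (hB : 0 < L2 x) (hC : 0 < L3 x)
    (t1 : L3 x < L1 x + L2 x) (t2 : L1 x < L2 x + L3 x) (t3 : L2 x < L1 x + L3 x)
    (S : ℝ) (hSpos : 0 < S)
    (hS2 : S ^ 2 = (L1 x + L2 x + L3 x) * (-L1 x + L2 x + L3 x)
        * (L1 x - L2 x + L3 x) * (L1 x + L2 x - L3 x)) :
    pd j (fun y => Real.arccos ((L1 y ^ 2 + L2 y ^ 2 - L3 y ^ 2) / (2 * L1 y * L2 y))) x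
      = ((L1 x ^ 2 + L2 x ^ 2 - L3 x ^ 2) * (pd j L1 x * L2 x + pd j L2 x * L1 x)
          - 2 * L1 x * L2 x * (L1 x * pd j L1 x + L2 x * pd j L2 x - L3 x * pd j L3 x))
        / (L1 x * L2 x * S) := by
  set v : Fin 3 → ℝ := Pi.single j 1 with hv
  have hg : HasDerivAt (fun t : ℝ => x + t • v) v 0 := by
    simpa using ((hasDerivAt_id (0 : ℝ)).smul_const v).const_add x
  have hx0 : x + (0 : ℝ) • v = x := by simp
  have hline : ∀ L : (Fin 3 → ℝ) → ℝ, DifferentiableAt ℝ L x →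
      HasDerivAt (fun t : ℝ => L (x + t • v)) (pd j L x) 0 := by
    intro L hL
    have hL' : HasFDerivAt L (fderiv ℝ L x) ((fun t : ℝ => x + t • v) 0) := by
      simpa using hL.hasFDerivAt
    exact hL'.comp_hasDerivAt 0 hg
  have c1 := hline L1 h1
  have c2 := hline L2 h2
  have c3 := hline L3 h3
  have hQlt : (L1 x ^ 2 + L2 x ^ 2 - L3 x ^ 2) / (2 * L1 x * L2 x) < 1 := by
    rw [div_lt_one (by positivity)]
    nlinarith [mul_pos (show (0:ℝ) < L3 x - L1 x + L2 x by linarith)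
      (show (0:ℝ) < L3 x + L1 x - L2 x by linarith)]
  have hQgt : -1 < (L1 x ^ 2 + L2 x ^ 2 - L3 x ^ 2) / (2 * L1 x * L2 x) := by
    rw [lt_div_iff₀ (by positivity)]
    nlinarith [mul_pos (show (0:ℝ) < L1 x + L2 x - L3 x by linarith)
      (show (0:ℝ) < L1 x + L2 x + L3 x by linarith)]
  have hden : 2 * L1 (x + (0:ℝ) • v) * L2 (x + (0:ℝ) • v) ≠ 0 := by
    rw [hx0]; positivity
  have hq := (((c1.pow 2).add (c2.pow 2)).sub (c3.pow 2)).div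
      ((HasDerivAt.const_mul 2 c1).mul c2) hden
  have hne1 : (L1 (x + (0:ℝ) • v) ^ 2 + L2 (x + (0:ℝ) • v) ^ 2 - L3 (x + (0:ℝ) • v) ^ 2)
      / (2 * L1 (x + (0:ℝ) • v) * L2 (x + (0:ℝ) • v)) ≠ -1 := by
    rw [hx0]; exact ne_of_gt hQgt
  have hne2 : (L1 (x + (0:ℝ) • v) ^ 2 + L2 (x + (0:ℝ) • v) ^ 2 - L3 (x + (0:ℝ) • v) ^ 2)
      / (2 * L1 (x + (0:ℝ) • v) * L2 (x + (0:ℝ) • v)) ≠ 1 := by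
    rw [hx0]; exact ne_of_lt hQlt
  have harc := (Real.hasDerivAt_arccos hne1 hne2).comp 0 hq
  have hGdiff : DifferentiableAt ℝ
      (fun y => (L1 y ^ 2 + L2 y ^ 2 - L3 y ^ 2) / (2 * L1 y * L2 y)) x := by
    have hnum : DifferentiableAt ℝ (fun y => L1 y ^ 2 + L2 y ^ 2 - L3 y ^ 2) x :=
      ((h1.pow 2).add (h2.pow 2)).sub (h3.pow 2)
    have hden2 : DifferentiableAt ℝ (fun y => 2 * L1 y * L2 y) x :=
      ((differentiableAt_const 2).mul h1).mul h2
    have hne : 2 * L1 x * L2 x ≠ 0 := by positivity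
    have he : (fun y => (L1 y ^ 2 + L2 y ^ 2 - L3 y ^ 2) / (2 * L1 y * L2 y))
        = fun y => (L1 y ^ 2 + L2 y ^ 2 - L3 y ^ 2) * (2 * L1 y * L2 y)⁻¹ := by
      funext y; rw [div_eq_mul_inv]
    rw [he]
    exact hnum.mul (hden2.inv hne)
  have hFdiff : DifferentiableAt ℝ
      (fun y => Real.arccos ((L1 y ^ 2 + L2 y ^ 2 - L3 y ^ 2) / (2 * L1 y * L2 y))) x := by
    have ha : DifferentiableAt ℝ Real.arccos
        ((L1 x ^ 2 + L2 x ^ 2 - L3 x ^ 2) / (2 * L1 x * L2 x)) :=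
      Real.differentiableAt_arccos.mpr ⟨ne_of_gt hQgt, ne_of_lt hQlt⟩
    have := ha.comp x hGdiff; exact this
  have hF' : HasFDerivAt
      (fun y => Real.arccos ((L1 y ^ 2 + L2 y ^ 2 - L3 y ^ 2) / (2 * L1 y * L2 y)))
      (fderiv ℝ (fun y => Real.arccos ((L1 y ^ 2 + L2 y ^ 2 - L3 y ^ 2) / (2 * L1 y * L2 y))) x)
      ((fun t : ℝ => x + t • v) 0) := by
    simpa using hFdiff.hasFDerivAt
  have hcomp := hF'.comp_hasDerivAt 0 hg
  have hval := hcomp.unique harc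
  have hpd : pd j (fun y => Real.arccos
      ((L1 y ^ 2 + L2 y ^ 2 - L3 y ^ 2) / (2 * L1 y * L2 y))) x
      = fderiv ℝ (fun y => Real.arccos
        ((L1 y ^ 2 + L2 y ^ 2 - L3 y ^ 2) / (2 * L1 y * L2 y))) x v := rfl
  rw [hpd, hval]
  simp only [hx0, Pi.mul_apply, Pi.add_apply, Pi.sub_apply, Pi.pow_apply]
  have hsqrt : Real.sqrt (1 - ((L1 x ^ 2 + L2 x ^ 2 - L3 x ^ 2) / (2 * L1 x * L2 x)) ^ 2)
      = S / (2 * L1 x * L2 x) := by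
    rw [show 1 - ((L1 x ^ 2 + L2 x ^ 2 - L3 x ^ 2) / (2 * L1 x * L2 x)) ^ 2
        = (S / (2 * L1 x * L2 x)) ^ 2 from by
      field_simp
      linear_combination (-1 : ℝ) * hS2]
    exact Real.sqrt_sq (by positivity)
  rw [hsqrt]
  have hS : S ≠ 0 := ne_of_gt hSpos
  have hA' : L1 x ≠ 0 := ne_of_gt hA
  have hB' : L2 x ≠ 0 := ne_of_gt hB
  field_simp
  ring

/-- Formula for the conformal partial derivative of the angle. -/
lemma pd_eGamma_eq (U : Set (Fin 3 → ℝ)) (hUopen : IsOpen U)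
    (d : Fin 3 → Fin 3 → (Fin 3 → ℝ) → ℝ)
    (hsmooth : ∀ i j : Fin 3, i ≠ j → ContDiffOn ℝ (⊤ : ℕ∞) (d i j) U)
    (hdep : ∀ i j k : Fin 3, i ≠ j → k ≠ i → k ≠ j → ∀ x ∈ U, pd k (d i j) x = 0)
    (hconf : ∀ i j : Fin 3, i ≠ j → ∀ x ∈ U, pd i (len d i j) x = d i j x)
    (x : Fin 3 → ℝ) (hx : x ∈ U) (i j k : Fin 3)
    (hij : i ≠ j) (hjk : j ≠ k) (hik : i ≠ k)
    (harr : (j = i + 1 ∧ k = i + 2) ∨ (j = i + 2 ∧ k = i + 1))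
    (hc : 0 < len d i j x) (hb : 0 < len d i k x) (ha : 0 < len d j k x)
    (t1 : len d i j x < len d i k x + len d j k x)
    (t2 : len d i k x < len d i j x + len d j k x)
    (t3 : len d j k x < len d i j x + len d i k x)
    (S : ℝ) (hSpos : 0 < S)
    (hS2 : S ^ 2 = (len d i j x + len d i k x + len d j k x)
        * (-len d i j x + len d i k x + len d j k x)
        * (len d i j x - len d i k x + len d j k x)
        * (len d i j x + len d i k x - len d j k x)) :
    pd j (eGamma d i) x
      = (2 * len d j k x * len d i j x * d j k x
          - (len d j k x ^ 2 + len d i j x ^ 2 - len d i k x ^ 2) * d j i x)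
        / (len d i j x * S) := by
  have hnhd : U ∈ nhds x := hUopen.mem_nhds hx
  have hdiff : ∀ u w : Fin 3, u ≠ w → DifferentiableAt ℝ (d u w) x := fun u w huw =>
    ((hsmooth u w huw).contDiffAt hnhd).differentiableAt (by simp)
  have hdlen : ∀ u w : Fin 3, u ≠ w → DifferentiableAt ℝ (len d u w) x := fun u w huw =>
    (hdiff u w huw).add (hdiff w u huw.symm)
  have pd_zero : ∀ u w : Fin 3, u ≠ w → j ≠ u → j ≠ w → pd j (len d u w) x = 0 := by
    intro u w huw hju hjw
    rw [pd_len_add d x j u w (hdiff u w huw) (hdiff w u huw.symm),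
      hdep u w j huw hju hjw x hx, hdep w u j huw.symm hjw hju x hx, add_zero]
  have pd_conf : ∀ w : Fin 3, j ≠ w → pd j (len d j w) x = d j w x := fun w hjw =>
    hconf j w hjw x hx
  have pd_conf_swap : ∀ u : Fin 3, j ≠ u → pd j (len d u j) x = d j u x := by
    intro u hju
    have e : len d u j = len d j u := funext fun y => add_comm _ _
    rw [e]; exact hconf j u hju x hx
  have hS' : S ≠ 0 := ne_of_gt hSpos
  rcases harr with ⟨hj, hk⟩ | ⟨hj, hk⟩
  · subst hj; subst hk
    have hcore := pd_arccos_core (len d i (i+1)) (len d i (i+2)) (len d (i+1) (i+2)) x (i+1)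
      (hdlen i (i+1) hij) (hdlen i (i+2) hik) (hdlen (i+1) (i+2) hjk)
      hc hb ha t3 t1 t2 S hSpos hS2
    have e1 : pd (i+1) (len d i (i+1)) x = d (i+1) i x := pd_conf_swap i (Ne.symm hij)
    have e2 : pd (i+1) (len d i (i+2)) x = 0 := pd_zero i (i+2) hik (Ne.symm hij) hjk
    have e3 : pd (i+1) (len d (i+1) (i+2)) x = d (i+1) (i+2) x := pd_conf (i+2) hjk
    rw [show pd (i+1) (eGamma d i) x = _ from hcore, e1, e2, e3]
    have hb' : len d i (i+2) x ≠ 0 := ne_of_gt hb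
    have hc' : len d i (i+1) x ≠ 0 := ne_of_gt hc
    field_simp
    ring
  · subst hj; subst hk
    have e3' : len d (i+1) (i+2) x = len d (i+2) (i+1) x := len_comm d (i+1) (i+2) x
    have hS2' : S ^ 2 = (len d i (i+1) x + len d i (i+2) x + len d (i+1) (i+2) x)
        * (-len d i (i+1) x + len d i (i+2) x + len d (i+1) (i+2) x)
        * (len d i (i+1) x - len d i (i+2) x + len d (i+1) (i+2) x)
        * (len d i (i+1) x + len d i (i+2) x - len d (i+1) (i+2) x) := by
      rw [e3']; linear_combination hS2
    have ha' : 0 < len d (i+1) (i+2) x := by rw [e3']; exact ha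
    have tt1 : len d (i+1) (i+2) x < len d i (i+1) x + len d i (i+2) x := by
      rw [e3']; linarith
    have tt2 : len d i (i+1) x < len d i (i+2) x + len d (i+1) (i+2) x := by
      rw [e3']; linarith
    have tt3 : len d i (i+2) x < len d i (i+1) x + len d (i+1) (i+2) x := by
      rw [e3']; linarith
    have hcore := pd_arccos_core (len d i (i+1)) (len d i (i+2)) (len d (i+1) (i+2)) x (i+2)
      (hdlen i (i+1) hik) (hdlen i (i+2) hij) (hdlen (i+1) (i+2) (Ne.symm hjk))
      hb hc ha' tt1 tt2 tt3 S hSpos hS2'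
    have e1 : pd (i+2) (len d i (i+1)) x = 0 := pd_zero i (i+1) hik (Ne.symm hij) hjk
    have e2 : pd (i+2) (len d i (i+2)) x = d (i+2) i x := pd_conf_swap i (Ne.symm hij)
    have e3 : pd (i+2) (len d (i+1) (i+2)) x = d (i+2) (i+1) x :=
      pd_conf_swap (i+1) hjk
    rw [show pd (i+2) (eGamma d i) x = _ from hcore, e1, e2, e3, e3']
    have hb' : len d i (i+1) x ≠ 0 := ne_of_gt hb
    have hc' : len d i (i+2) x ≠ 0 := ne_of_gt hc
    field_simp
    ring

/-- Formula for the conformal height. -/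
lemma eHeight_eq (d : Fin 3 → Fin 3 → (Fin 3 → ℝ) → ℝ)
    (x : Fin 3 → ℝ) (i j k : Fin 3)
    (hij : i ≠ j) (hjk : j ≠ k) (hik : i ≠ k)
    (hother : other i j = k)
    (harr : (j = i + 1 ∧ k = i + 2) ∨ (j = i + 2 ∧ k = i + 1))
    (hc : 0 < len d i j x) (hb : 0 < len d i k x) (ha : 0 < len d j k x)
    (t1 : len d i j x < len d i k x + len d j k x)
    (t2 : len d i k x < len d i j x + len d j k x)
    (t3 : len d j k x < len d i j x + len d i k x)
    (S : ℝ) (hSpos : 0 < S)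
    (hS2 : S ^ 2 = (len d i j x + len d i k x + len d j k x)
        * (-len d i j x + len d i k x + len d j k x)
        * (len d i j x - len d i k x + len d j k x)
        * (len d i j x + len d i k x - len d j k x)) :
    eHeight d i j x
      = (2 * len d i k x * len d i j x * d i k x
          - (len d i k x ^ 2 + len d i j x ^ 2 - len d j k x ^ 2) * d i j x) / S := by
  have hS' : S ≠ 0 := ne_of_gt hSpos
  rcases harr with ⟨hj, hk⟩ | ⟨hj, hk⟩
  · subst hj; subst hk
    unfold eHeight eGamma
    rw [hother]
    set A := len d i (i+1) x with hA
    set B := len d i (i+2) x with hB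
    set C := len d (i+1) (i+2) x with hC
    have hQle1 : (A ^ 2 + B ^ 2 - C ^ 2) / (2 * A * B) ≤ 1 := by
      rw [div_le_one (by positivity)]; nlinarith
    have hQge1 : -1 ≤ (A ^ 2 + B ^ 2 - C ^ 2) / (2 * A * B) := by
      rw [le_div_iff₀ (by positivity)]; nlinarith
    rw [Real.cos_arccos hQge1 hQle1, Real.sin_arccos]
    have hsqrt : Real.sqrt (1 - ((A ^ 2 + B ^ 2 - C ^ 2) / (2 * A * B)) ^ 2)
        = S / (2 * A * B) := by
      rw [show 1 - ((A ^ 2 + B ^ 2 - C ^ 2) / (2 * A * B)) ^ 2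
          = (S / (2 * A * B)) ^ 2 from by
        field_simp
        linear_combination (-1 : ℝ) * hS2]
      exact Real.sqrt_sq (by positivity)
    rw [hsqrt]
    have hA' : A ≠ 0 := ne_of_gt hc
    have hB' : B ≠ 0 := ne_of_gt hb
    field_simp
    ring
  · subst hj; subst hk
    unfold eHeight eGamma
    rw [hother]
    have e3' : len d (i+1) (i+2) x = len d (i+2) (i+1) x := len_comm d (i+1) (i+2) x
    rw [e3']
    set A := len d i (i+1) x with hA
    set B := len d i (i+2) x with hB
    set C := len d (i+2) (i+1) x with hC
    have hQle1 : (A ^ 2 + B ^ 2 - C ^ 2) / (2 * A * B) ≤ 1 := by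
      rw [div_le_one (by positivity)]; nlinarith
    have hQge1 : -1 ≤ (A ^ 2 + B ^ 2 - C ^ 2) / (2 * A * B) := by
      rw [le_div_iff₀ (by positivity)]; nlinarith
    rw [Real.cos_arccos hQge1 hQle1, Real.sin_arccos]
    have hsqrt : Real.sqrt (1 - ((A ^ 2 + B ^ 2 - C ^ 2) / (2 * A * B)) ^ 2)
        = S / (2 * A * B) := by
      rw [show 1 - ((A ^ 2 + B ^ 2 - C ^ 2) / (2 * A * B)) ^ 2
          = (S / (2 * A * B)) ^ 2 from by
        field_simp
        linear_combination (-1 : ℝ) * hS2]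
      exact Real.sqrt_sq (by positivity)
    rw [hsqrt]
    have hA' : A ≠ 0 := ne_of_gt hb
    have hB' : B ≠ 0 := ne_of_gt hc
    field_simp

/-- Symmetry of the Euclidean conformal angle variation:
`∂γ_i/∂f_j = ∂γ_j/∂f_i`, equivalently `h_ij = h_ji`. -/
theorem euclidean_angle_variation_symm
    (U : Set (Fin 3 → ℝ)) (hUopen : IsOpen U)
    (d : Fin 3 → Fin 3 → (Fin 3 → ℝ) → ℝ)
    (hsmooth : ∀ i j : Fin 3, i ≠ j → ContDiffOn ℝ (⊤ : ℕ∞) (d i j) U)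
    (hdep : ∀ i j k : Fin 3, i ≠ j → k ≠ i → k ≠ j → ∀ x ∈ U, pd k (d i j) x = 0)
    (hpos : ∀ i j : Fin 3, i ≠ j → ∀ x ∈ U, 0 < len d i j x)
    (htri : ∀ i j k : Fin 3, i ≠ j → j ≠ k → i ≠ k → ∀ x ∈ U,
      len d i j x < len d i k x + len d k j x)
    (hcompat : ∀ x ∈ U,
      d 0 1 x ^ 2 + d 1 2 x ^ 2 + d 2 0 x ^ 2
        = d 1 0 x ^ 2 + d 2 1 x ^ 2 + d 0 2 x ^ 2)
    (hconf : ∀ i j : Fin 3, i ≠ j → ∀ x ∈ U, pd i (len d i j) x = d i j x)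
    :
    ∀ x ∈ U, ∀ i j : Fin 3, i ≠ j →
      pd j (eGamma d i) x = pd i (eGamma d j) x ∧
      eHeight d i j x = eHeight d j i x := by
  intro x hx i j hij
  set k := other i j with hkdef
  have hki : k ≠ i := other_ne_left i j hij
  have hkj : k ≠ j := other_ne_right i j hij
  have hjk : j ≠ k := hkj.symm
  have hik : i ≠ k := hki.symm
  have hoc : other j i = k := (other_comm i j).trans hkdef.symm
  have harr1 : (j = i + 1 ∧ k = i + 2) ∨ (j = i + 2 ∧ k = i + 1) := by
    rw [hkdef]; exact fin3_arrange i j hij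
  have harr2 : (i = j + 1 ∧ k = j + 2) ∨ (i = j + 2 ∧ k = j + 1) := by
    rw [← hoc]; exact fin3_arrange j i hij.symm
  have eji : len d j i x = len d i j x := len_comm d j i x
  have ekj : len d k j x = len d j k x := len_comm d k j x
  have eki : len d k i x = len d i k x := len_comm d k i x
  have hc : 0 < len d i j x := hpos i j hij x hx
  have hb : 0 < len d i k x := hpos i k hik x hx
  have ha : 0 < len d j k x := hpos j k hjk x hx
  have t1 : len d i j x < len d i k x + len d j k x := by
    have := htri i j k hij hjk hik x hx; rw [ekj] at this; exact this
  have t2 : len d i k x < len d i j x + len d j k x := by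
    have := htri i k j hik hkj hij x hx; exact this
  have t3 : len d j k x < len d i j x + len d i k x := by
    have := htri j k i hjk hki hij.symm x hx; rw [len_comm d j i x] at this; linarith
  set P := (len d i j x + len d i k x + len d j k x)
      * (-len d i j x + len d i k x + len d j k x)
      * (len d i j x - len d i k x + len d j k x)
      * (len d i j x + len d i k x - len d j k x) with hPdef
  have hPpos : 0 < P := by
    apply mul_pos (mul_pos (mul_pos (by linarith) (by linarith)) (by linarith)) (by linarith)
  set S := Real.sqrt P with hSdef
  have hSpos : 0 < S := Real.sqrt_pos.mpr hPpos
  have hS2 : S ^ 2 = P := Real.sq_sqrt hPpos.le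
  have hS2ji : S ^ 2 = (len d j i x + len d j k x + len d i k x)
      * (-len d j i x + len d j k x + len d i k x)
      * (len d j i x - len d j k x + len d i k x)
      * (len d j i x + len d j k x - len d i k x) := by
    rw [eji]; rw [hS2, hPdef]; ring
  have hC := compat_perm d x (hcompat x hx) i j k hij hjk hik
  constructor
  · rw [pd_eGamma_eq U hUopen d hsmooth hdep hconf x hx i j k hij hjk hik harr1
      hc hb ha t1 t2 t3 S hSpos (by rw [hS2, hPdef]),
      pd_eGamma_eq U hUopen d hsmooth hdep hconf x hx j i k hij.symm hik hjk harr2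
      (by rw [eji]; exact hc) ha hb (by rw [eji]; linarith) (by rw [eji]; linarith)
      (by rw [eji]; linarith) S hSpos hS2ji]
    rw [eji]
    have hnum : 2 * len d j k x * len d i j x * d j k x
        - (len d j k x ^ 2 + len d i j x ^ 2 - len d i k x ^ 2) * d j i x
        = 2 * len d i k x * len d i j x * d i k x
        - (len d i k x ^ 2 + len d i j x ^ 2 - len d j k x ^ 2) * d i j x := by
      simp only [len]
      linear_combination (d i j x + d j i x) * hC
    rw [hnum]
  · rw [eHeight_eq d x i j k hij hjk hik hkdef.symm harr1 hc hb ha t1 t2 t3 S hSpos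
      (by rw [hS2, hPdef]),
      eHeight_eq d x j i k hij.symm hik hjk hoc harr2
      (by rw [eji]; exact hc) ha hb (by rw [eji]; linarith) (by rw [eji]; linarith)
      (by rw [eji]; linarith) S hSpos hS2ji]
    rw [eji]
    have hnum : 2 * len d i k x * len d i j x * d i k x
        - (len d i k x ^ 2 + len d i j x ^ 2 - len d j k x ^ 2) * d i j x
        = 2 * len d j k x * len d i j x * d j k x
        - (len d j k x ^ 2 + len d i j x ^ 2 - len d i k x ^ 2) * d j i x := by
      simp only [len]
      linear_combination (-(d i j x) - d j i x) * hC
    rw [hnum]
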